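/- Let ĝ and ω̂ be dual quaternions with ‖ω̂‖² < 2/3, and for each natural number k ≥ 1 define B_k := Σ_{i=1}^{k} ω̂^(i−1) · ĝ · ω̂^(k−i). Then B_k converges to the zero dual quaternion as k → ∞. -/

import Mathlib

/-!
With `q = √(3/2) ‖ω̂‖`, the hypothesis says exactly `q < 1`. Submultiplicativity up to `√(3/2)`
bounds each of the `k` summands of `B_k` by `q^(k-1) ‖ĝ‖`, and the triangle inequality (the norm
is the Euclidean norm of the pair `(a_r, a_d)`) gives `‖B_k‖ ≤ k q^(k-1) ‖ĝ‖ → 0`.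
-/

open Filter

/-- The norm `‖a_r + ε a_d‖ = √(‖a_r‖² + ‖a_d‖²)` of a dual quaternion. -/
noncomputable def dualQuatNorm (x : DualNumber (Quaternion ℝ)) : ℝ :=
  Real.sqrt (‖x.fst‖ ^ 2 + ‖x.snd‖ ^ 2)

open Topology

lemma dualQuatNorm_nonneg (x : DualNumber (Quaternion ℝ)) : 0 ≤ dualQuatNorm x :=
  Real.sqrt_nonneg _

lemma dualQuatNorm_eq_norm_toLp (x : DualNumber (Quaternion ℝ)) :
    dualQuatNorm x = ‖WithLp.toLp 2 (x.fst, x.snd)‖ :=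
  (WithLp.prod_norm_eq_of_L2 _).symm

lemma dualQuatNorm_add_le (x y : DualNumber (Quaternion ℝ)) :
    dualQuatNorm (x + y) ≤ dualQuatNorm x + dualQuatNorm y := by
  simp only [dualQuatNorm_eq_norm_toLp]
  exact norm_add_le _ _

lemma dualQuatNorm_sum_le {ι : Type*} (s : Finset ι) (f : ι → DualNumber (Quaternion ℝ)) :
    dualQuatNorm (∑ i ∈ s, f i) ≤ ∑ i ∈ s, dualQuatNorm (f i) :=
  Finset.le_sum_of_subadditive _ (by simp [dualQuatNorm]) dualQuatNorm_add_le s f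

-- The difference is `((ac - bd)² + (ad - bc)²) / 2 + (bd)²`.
lemma sq_mul_add_sq_le (a b c d : ℝ) :
    (a * c) ^ 2 + (a * d + b * c) ^ 2 ≤ 3 / 2 * ((a ^ 2 + b ^ 2) * (c ^ 2 + d ^ 2)) := by
  nlinarith [sq_nonneg (a * c - b * d), sq_nonneg (a * d - b * c), sq_nonneg (b * d)]

lemma dualQuatNorm_mul_le (x y : DualNumber (Quaternion ℝ)) :
    dualQuatNorm (x * y) ≤ √(3 / 2) * dualQuatNorm x * dualQuatNorm y := by
  have hsnd : ‖(x * y).snd‖ ≤ ‖x.fst‖ * ‖y.snd‖ + ‖x.snd‖ * ‖y.fst‖ := by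
    rw [DualNumber.snd_mul, ← norm_mul, ← norm_mul]
    exact norm_add_le _ _
  have hsq : ‖(x * y).fst‖ ^ 2 + ‖(x * y).snd‖ ^ 2
      ≤ 3 / 2 * ((‖x.fst‖ ^ 2 + ‖x.snd‖ ^ 2) * (‖y.fst‖ ^ 2 + ‖y.snd‖ ^ 2)) := by
    rw [TrivSqZeroExt.fst_mul, norm_mul]
    grw [hsnd]
    exact sq_mul_add_sq_le _ _ _ _
  calc dualQuatNorm (x * y)
      ≤ √(3 / 2 * ((‖x.fst‖ ^ 2 + ‖x.snd‖ ^ 2) * (‖y.fst‖ ^ 2 + ‖y.snd‖ ^ 2))) :=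
        Real.sqrt_le_sqrt hsq
    _ = √(3 / 2) * dualQuatNorm x * dualQuatNorm y := by
        rw [Real.sqrt_mul (by norm_num), Real.sqrt_mul (by positivity), mul_assoc]; rfl

lemma dualQuatNorm_pow_mul_le (ω x : DualNumber (Quaternion ℝ)) (n : ℕ) :
    dualQuatNorm (ω ^ n * x) ≤ (√(3 / 2) * dualQuatNorm ω) ^ n * dualQuatNorm x := by
  induction n with
  | zero => simp
  | succ n ih =>
    calc dualQuatNorm (ω ^ (n + 1) * x)
        ≤ √(3 / 2) * dualQuatNorm ω * dualQuatNorm (ω ^ n * x) := by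
          rw [pow_succ', mul_assoc]; exact dualQuatNorm_mul_le _ _
      _ ≤ √(3 / 2) * dualQuatNorm ω * ((√(3 / 2) * dualQuatNorm ω) ^ n * dualQuatNorm x) := by
          have := dualQuatNorm_nonneg ω
          gcongr
      _ = (√(3 / 2) * dualQuatNorm ω) ^ (n + 1) * dualQuatNorm x := by ring

lemma dualQuatNorm_mul_pow_le (x ω : DualNumber (Quaternion ℝ)) (n : ℕ) :
    dualQuatNorm (x * ω ^ n) ≤ dualQuatNorm x * (√(3 / 2) * dualQuatNorm ω) ^ n := by
  induction n with
  | zero => simp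
  | succ n ih =>
    calc dualQuatNorm (x * ω ^ (n + 1))
        ≤ √(3 / 2) * dualQuatNorm (x * ω ^ n) * dualQuatNorm ω := by
          rw [pow_succ, ← mul_assoc]; exact dualQuatNorm_mul_le _ _
      _ ≤ √(3 / 2) * (dualQuatNorm x * (√(3 / 2) * dualQuatNorm ω) ^ n) * dualQuatNorm ω := by
          have := dualQuatNorm_nonneg ω
          gcongr
      _ = dualQuatNorm x * (√(3 / 2) * dualQuatNorm ω) ^ (n + 1) := by ring

lemma dualQuatNorm_pow_mul_mul_pow_le (ω g : DualNumber (Quaternion ℝ)) (m n : ℕ) :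
    dualQuatNorm (ω ^ m * g * ω ^ n) ≤ (√(3 / 2) * dualQuatNorm ω) ^ (m + n) * dualQuatNorm g := by
  calc dualQuatNorm (ω ^ m * g * ω ^ n)
      ≤ (√(3 / 2) * dualQuatNorm ω) ^ m * dualQuatNorm g * (√(3 / 2) * dualQuatNorm ω) ^ n := by
        have := dualQuatNorm_nonneg ω
        grw [dualQuatNorm_mul_pow_le, dualQuatNorm_pow_mul_le]
    _ = (√(3 / 2) * dualQuatNorm ω) ^ (m + n) * dualQuatNorm g := by ring

lemma dualQuatNorm_sum_pow_mul_mul_pow_le (ω g : DualNumber (Quaternion ℝ)) (k : ℕ) :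
    dualQuatNorm (∑ i ∈ Finset.Icc 1 (k + 1), ω ^ (i - 1) * g * ω ^ (k + 1 - i))
      ≤ (k + 1) * ((√(3 / 2) * dualQuatNorm ω) ^ k * dualQuatNorm g) := by
  calc dualQuatNorm (∑ i ∈ Finset.Icc 1 (k + 1), ω ^ (i - 1) * g * ω ^ (k + 1 - i))
      ≤ ∑ i ∈ Finset.Icc 1 (k + 1), dualQuatNorm (ω ^ (i - 1) * g * ω ^ (k + 1 - i)) :=
        dualQuatNorm_sum_le _ _
    _ ≤ ∑ _i ∈ Finset.Icc 1 (k + 1), (√(3 / 2) * dualQuatNorm ω) ^ k * dualQuatNorm g := by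
        refine Finset.sum_le_sum fun i hi => ?_
        have hexp : i - 1 + (k + 1 - i) = k := by grind
        simpa only [hexp] using dualQuatNorm_pow_mul_mul_pow_le ω g (i - 1) (k + 1 - i)
    _ = (k + 1) * ((√(3 / 2) * dualQuatNorm ω) ^ k * dualQuatNorm g) := by simp

lemma tendsto_succ_mul_pow_atTop_nhds_zero {q : ℝ} (hq0 : 0 ≤ q) (hq1 : q < 1) :
    Tendsto (fun k : ℕ => ((k : ℝ) + 1) * q ^ k) atTop (𝓝 0) := by
  simpa [add_mul] using (tendsto_self_mul_const_pow_of_lt_one hq0 hq1).add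
    (tendsto_pow_atTop_nhds_zero_of_lt_one hq0 hq1)

/-- For dual quaternions `ĝ` and `ω̂` with `‖ω̂‖² < 2/3`, the sums
`B_k = Σ_{i=1}^k ω̂^(i−1) ĝ ω̂^(k−i)` converge (in the dual quaternion norm)
to the zero dual quaternion as `k → ∞`. -/
theorem Bk_tendsto_zero (g ω : DualNumber (Quaternion ℝ))
    (hω : dualQuatNorm ω ^ 2 < 2 / 3) :
    Tendsto
      (fun k : ℕ => dualQuatNorm ((∑ i ∈ Finset.Icc 1 k, ω ^ (i - 1) * g * ω ^ (k - i)) - 0))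
      atTop (nhds 0) := by
  set q := √(3 / 2) * dualQuatNorm ω
  have hq0 : 0 ≤ q := by positivity [dualQuatNorm_nonneg ω]
  have hq1 : q < 1 := by
    have hq_sq : q ^ 2 < 1 ^ 2 := by
      rw [mul_pow, Real.sq_sqrt (by norm_num)]; linarith
    exact lt_of_pow_lt_pow_left₀ 2 zero_le_one hq_sq
  rw [← tendsto_add_atTop_iff_nat 1]
  simp only [sub_zero]
  have hbound := (tendsto_succ_mul_pow_atTop_nhds_zero hq0 hq1).mul_const (dualQuatNorm g)
  rw [zero_mul] at hbound
  refine squeeze_zero (fun _ => dualQuatNorm_nonneg _) (fun k => ?_) hbound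
  grw [dualQuatNorm_sum_pow_mul_mul_pow_le]
  rw [mul_assoc]
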